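/- arXiv:2409.02974 — 2 statements merged into one kernel-verified Lean document; each statement's English description precedes it below -/
import Mathlib

section
/- Let G be a finite simple graph on n+2 vertices and let u, v be distinct vertices of G. Set m = ⌊(n+2)/3⌋. Then every inclusion-wise minimal u–v separator T in G either has |T| ≤ m, or satisfies T = N(S) for some set S ⊆ V(G) with |S| ≤ m, where N(S) is the outer neighbourhood of S in G. Consequently, the family of inclusion-wise minimal u–v separators is contained in the union of all subsets of V(G) of size at most m and all outer neighbourhoods of subsets of V(G) of size at most m. -/
/-- `Separates G u v T` means every walk from `u` to `v` in `G` meets `T`;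
for `u, v ∉ T` this says `u` and `v` lie in different connected components of `G \ T`. -/
def Separates {V : Type*} (G : SimpleGraph V) (u v : V) (T : Set V) : Prop :=
  ∀ p : G.Walk u v, ∃ x ∈ p.support, x ∈ T

/-- `T` is an inclusion-wise minimal `u`–`v` separator in `G`:
`T ⊆ V(G) \ {u, v}`, removing `T` puts `u` and `v` in different connected components,
and removing any proper subset `T' ⊊ T` leaves `u` and `v` in the same component. -/
def IsMinSeparator {V : Type*} (G : SimpleGraph V) (u v : V) (T : Set V) : Prop :=
  u ∉ T ∧ v ∉ T ∧ Separates G u v T ∧ ∀ T' ⊂ T, ¬ Separates G u v T'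

/-- `mc G u v` is the number of inclusion-wise minimal `u`–`v` separators in `G`. -/
noncomputable def mc {V : Type*} (G : SimpleGraph V) (u v : V) : ℕ :=
  {T : Set V | IsMinSeparator G u v T}.ncard

/-- `g n` is the maximum of `mc G u v` over graphs `G` on `n + 2` vertices and
pairs of distinct vertices `u ≠ v`. -/
noncomputable def g (n : ℕ) : ℕ :=
  sSup {k | ∃ (G : SimpleGraph (Fin (n + 2))) (u v : Fin (n + 2)), u ≠ v ∧ mc G u v = k}

/-- `T` is a vertex cut of `G`: removing `T` disconnects `G`, i.e. some two remaining
vertices lie in different connected components of `G \ T`. -/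
def IsCutSet {V : Type*} (G : SimpleGraph V) (T : Set V) : Prop :=
  ∃ u v, u ∉ T ∧ v ∉ T ∧ Separates G u v T

/-- `T` is an inclusion-wise minimal vertex cut of `G`. -/
def IsMinCutSet {V : Type*} (G : SimpleGraph V) (T : Set V) : Prop :=
  IsCutSet G T ∧ ∀ T' ⊂ T, ¬ IsCutSet G T'

/-- `c n` is the maximum number of inclusion-wise minimal vertex cuts of a graph
on `n` vertices. -/
noncomputable def c (n : ℕ) : ℕ :=
  sSup {k | ∃ G : SimpleGraph (Fin n), {T : Set (Fin n) | IsMinCutSet G T}.ncard = k}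

/-- The binary entropy function `H(x) = -x log₂ x - (1 - x) log₂ (1 - x)`. -/
noncomputable def binH (x : ℝ) : ℝ :=
  -x * Real.logb 2 x - (1 - x) * Real.logb 2 (1 - x)

/-- The outer neighbourhood of `X` in `G`: all vertices outside `X` having a
neighbour in `X`. -/
def outNbhd {V : Type*} (G : SimpleGraph V) (X : Set V) : Set V :=
  {y | y ∉ X ∧ ∃ x ∈ X, G.Adj x y}

/-- The vertex set of the connected component of `u` in `G \ T`: all vertices
reachable from `u` by a walk avoiding `T`. -/
def compOf {V : Type*} (G : SimpleGraph V) (T : Set V) (u : V) : Set V :=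
  {x | ∃ p : G.Walk u x, ∀ y ∈ p.support, y ∉ T}

section Aux
variable {V : Type*} {G : SimpleGraph V} {u v : V} {T : Set V}

lemma sep_symm (h : Separates G u v T) : Separates G v u T := by
  intro p
  obtain ⟨x, hx, hxT⟩ := h p.reverse
  exact ⟨x, by simpa using hx, hxT⟩

lemma minsep_symm (h : IsMinSeparator G u v T) : IsMinSeparator G v u T :=
  ⟨h.2.1, h.1, sep_symm h.2.2.1, fun T' hT' hs => h.2.2.2 T' hT' (sep_symm hs)⟩

lemma compOf_disjoint : Disjoint (compOf G T u) T := by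
  rw [Set.disjoint_left]
  rintro x ⟨p, hp⟩ hxT
  exact hp x p.end_mem_support hxT

lemma mem_compOf_self (h : u ∉ T) : u ∈ compOf G T u :=
  ⟨SimpleGraph.Walk.nil, by simp [h]⟩

lemma compOf_uv_disjoint (hsep : Separates G u v T) :
    Disjoint (compOf G T u) (compOf G T v) := by
  rw [Set.disjoint_left]
  rintro x ⟨p, hp⟩ ⟨q, hq⟩
  obtain ⟨y, hy, hyT⟩ := hsep (p.append q.reverse)
  rw [SimpleGraph.Walk.mem_support_append_iff] at hy
  rcases hy with hy | hy
  · exact hp y hy hyT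
  · exact hq y (by simpa using hy) hyT

lemma minsep_eq_outNbhd [DecidableEq V] (h : IsMinSeparator G u v T) :
    T = outNbhd G (compOf G T u) := by
  obtain ⟨huT, hvT, hsep, hmin⟩ := h
  apply Set.eq_of_subset_of_subset
  · -- T ⊆ N(C_u)
    intro t htT
    have hss : T \ {t} ⊂ T := by
      refine ⟨Set.diff_subset, fun hsub => ?_⟩
      have := hsub htT
      simp at this
    have hns := hmin _ hss
    rw [Separates] at hns
    push_neg at hns
    obtain ⟨p, hp⟩ := hns
    obtain ⟨x, hx, hxT⟩ := hsep p
    have hxt : x = t := by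
      by_contra hne
      exact hp x hx ⟨hxT, hne⟩
    subst hxt
    set q := p.takeUntil x hx with hqdef
    have hcount : q.support.count x = 1 := p.count_support_takeUntil_eq_one hx
    have hqsub := p.support_takeUntil_subset hx
    refine ⟨?_, ?_⟩
    · rintro ⟨r, hr⟩
      exact hr x r.end_mem_support hxT
    · cases hq : q.reverse with
      | nil => exact absurd hxT huT
      | @cons _ w _ hadj r =>
        refine ⟨w, ⟨r.reverse, ?_⟩, hadj.symm⟩
        intro y hy hyT
        have hyr : y ∈ r.support := by simpa using hy
        have h2 : q.support.count x = 1 + r.support.count x := by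
          have : q.reverse.support.count x = q.support.count x := by
            rw [q.support_reverse]; exact List.count_reverse ..
          rw [hq] at this
          simpa [List.count_cons, add_comm] using this.symm
        have hyt : y ≠ x := by
          intro hyx
          subst hyx
          have : 1 ≤ r.support.count y := List.one_le_count_iff.mpr hyr
          omega
        have hyq : y ∈ q.support := by
          have : y ∈ q.reverse.support := by rw [hq]; simp [hyr]
          simpa using this
        exact hp y (hqsub hyq) ⟨hyT, hyt⟩
  · -- N(C_u) ⊆ T
    rintro y ⟨hyC, x, ⟨p, hp⟩, hadj⟩
    by_contra hyT
    refine hyC ⟨p.concat hadj, ?_⟩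
    intro z hz
    rw [SimpleGraph.Walk.support_concat] at hz
    rcases (List.mem_append.mp hz) with hz | hz
    · exact hp z hz
    · simp at hz; subst hz; exact hyT

end Aux

/-- Every minimal `u`–`v` separator `T` in a graph on `n + 2` vertices either has
`|T| ≤ ⌊(n+2)/3⌋` or is the outer neighbourhood of a set of size at most `⌊(n+2)/3⌋`;
consequently the family of minimal separators is contained in the union of all small
sets and of all outer neighbourhoods of small sets. -/
theorem min_separator_small_or_outNbhd (n : ℕ) (G : SimpleGraph (Fin (n + 2)))
    (u v : Fin (n + 2)) (huv : u ≠ v) :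
    (∀ T : Set (Fin (n + 2)), IsMinSeparator G u v T →
      T.ncard ≤ (n + 2) / 3 ∨
        ∃ S : Set (Fin (n + 2)), S.ncard ≤ (n + 2) / 3 ∧ T = outNbhd G S) ∧
    {T : Set (Fin (n + 2)) | IsMinSeparator G u v T} ⊆
      {T : Set (Fin (n + 2)) | T.ncard ≤ (n + 2) / 3} ∪
        (outNbhd G '' {S : Set (Fin (n + 2)) | S.ncard ≤ (n + 2) / 3}) := by
  have main : ∀ T : Set (Fin (n + 2)), IsMinSeparator G u v T →
      T.ncard ≤ (n + 2) / 3 ∨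
        ∃ S : Set (Fin (n + 2)), S.ncard ≤ (n + 2) / 3 ∧ T = outNbhd G S := by
    intro T hT
    by_cases hTc : T.ncard ≤ (n + 2) / 3
    · exact Or.inl hTc
    right
    set A := compOf G T u with hA
    set B := compOf G T v with hB
    have hTA : T = outNbhd G A := minsep_eq_outNbhd hT
    have hTB : T = outNbhd G B := minsep_eq_outNbhd (minsep_symm hT)
    have hdAB : Disjoint A B := compOf_uv_disjoint hT.2.2.1
    have hdAT : Disjoint A T := compOf_disjoint
    have hdBT : Disjoint B T := compOf_disjoint
    have hsum : A.ncard + B.ncard + T.ncard ≤ n + 2 := by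
      have h1 : (A ∪ B ∪ T).ncard = A.ncard + B.ncard + T.ncard := by
        rw [Set.ncard_union_eq (Set.disjoint_union_left.mpr ⟨hdAT, hdBT⟩)
            (Set.toFinite _) (Set.toFinite _),
          Set.ncard_union_eq hdAB (Set.toFinite _) (Set.toFinite _)]
      have h2 : (A ∪ B ∪ T).ncard ≤ (Set.univ : Set (Fin (n + 2))).ncard :=
        Set.ncard_le_ncard (Set.subset_univ _) (Set.toFinite _)
      rw [Set.ncard_univ, Nat.card_eq_fintype_card, Fintype.card_fin] at h2
      omega
    rcases (show A.ncard ≤ (n + 2) / 3 ∨ B.ncard ≤ (n + 2) / 3 by omega) with h | h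
    · exact ⟨A, h, hTA⟩
    · exact ⟨B, h, hTB⟩
  refine ⟨main, fun T hT => ?_⟩
  rcases main T hT with h | ⟨S, hS, hTS⟩
  · exact Or.inl h
  · exact Or.inr ⟨S, hS, hTS.symm⟩
end

section
/- Let G₁ be a graph with distinguished distinct vertices u₁, v₁ and G₂ a graph with distinguished distinct vertices u₂, v₂, and let G be the graph obtained from the disjoint union of G₁ and G₂ by identifying u₁ with u₂ into a vertex u and identifying v₁ with v₂ into a vertex v. Then a set T ⊆ V(G) \ {u, v} is an inclusion-wise minimal u–v separator in G if and only if, for each i ∈ {1, 2}, the set T ∩ V(Gᵢ) is an inclusion-wise minimal uᵢ–vᵢ separator in Gᵢ. Consequently, mc_{u,v}(G) = mc_{u₁,v₁}(G₁)·mc_{u₂,v₂}(G₂). -/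
/-!
Writing `Tᵢ = fᵢ⁻¹' T`, the map `T ↦ (T₁, T₂)` is a bijection between sets avoiding `u, v` and
pairs of sets avoiding `uᵢ, vᵢ`, monotone in both directions, so minimality and the count
transfer once we know that `T` separates `u` from `v` iff each `Tᵢ` separates `uᵢ` from `vᵢ`.
One direction maps walks of `Gᵢ` into `G`. For the other, the union of the images of the
components of `uᵢ` in `Gᵢ - Tᵢ` is closed under edges of `G - T`: an edge of `G` leaving a vertex
of the first side comes from `G₂` only at a shared vertex, i.e. at `u` (the component of `u₁`
misses `v₁`), and from `u` it enters the component of `u₂`.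
-/

open Function Set

section Separates

variable {V W : Type*} {G : SimpleGraph V} {u v : V} {T : Set V}

theorem separates_iff_notMem_compOf : Separates G u v T ↔ v ∉ compOf G T u := by
  simp only [Separates, compOf, mem_ofPred_eq, not_exists, not_forall, not_not, exists_prop]

theorem start_mem_compOf (hu : u ∉ T) : u ∈ compOf G T u :=
  ⟨.nil, by simpa using hu⟩

theorem mem_compOf_of_adj {x y : V} (hx : x ∈ compOf G T u) (hxy : G.Adj x y) (hy : y ∉ T) :
    y ∈ compOf G T u := by
  obtain ⟨p, hp⟩ := hx
  refine ⟨p.concat hxy, fun z hz => ?_⟩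
  rw [SimpleGraph.Walk.support_concat, List.mem_append, List.mem_singleton] at hz
  rcases hz with hz | rfl
  exacts [hp z hz, hy]

theorem separates_of_closed {C : Set V} (hu : u ∈ C) (hv : v ∉ C)
    (hC : ∀ x y, x ∈ C → G.Adj x y → y ∉ T → y ∈ C) : Separates G u v T := by
  suffices ∀ {x y} (p : G.Walk x y), x ∈ C → y ∉ C → ∃ z ∈ p.support, z ∈ T from
    fun p => this p hu hv
  intro x y p
  induction p with
  | nil => exact fun hx hy => absurd hx hy
  | @cons x z y hxz p ih =>
    intro hx hy
    by_cases hz : z ∈ T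
    · exact ⟨z, by simp, hz⟩
    · obtain ⟨w, hw, hwT⟩ := ih (hC x z hx hxz hz) hy
      exact ⟨w, List.mem_cons_of_mem _ hw, hwT⟩

theorem Separates.comap {H : SimpleGraph W} (φ : H →g G) {a b : W}
    (hT : Separates G (φ a) (φ b) T) : Separates H a b (φ ⁻¹' T) := fun p => by
  obtain ⟨x, hx, hxT⟩ := hT (p.map φ)
  rw [SimpleGraph.Walk.support_map, List.mem_map] at hx
  obtain ⟨y, hy, rfl⟩ := hx
  exact ⟨y, hy, hxT⟩

end Separates

/-- `G` is obtained from `G₁` and `G₂` by identifying `u₁` with `u₂` into `u` and `v₁` with `v₂`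
into `v`, the two sides being embedded by `f₁` and `f₂`. -/
structure IsGluing {V₁ V₂ V : Type*} (G₁ : SimpleGraph V₁) (G₂ : SimpleGraph V₂)
    (G : SimpleGraph V) (u₁ v₁ : V₁) (u₂ v₂ : V₂) (u v : V) (f₁ : V₁ → V) (f₂ : V₂ → V) :
    Prop where
  injective₁ : Injective f₁
  injective₂ : Injective f₂
  range_union : range f₁ ∪ range f₂ = univ
  range_inter : range f₁ ∩ range f₂ ⊆ {u, v}
  map_u₁ : f₁ u₁ = u
  map_u₂ : f₂ u₂ = u
  map_v₁ : f₁ v₁ = v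
  map_v₂ : f₂ v₂ = v
  adj_iff : ∀ x y, G.Adj x y ↔
    (∃ a b, G₁.Adj a b ∧ f₁ a = x ∧ f₁ b = y) ∨ (∃ a b, G₂.Adj a b ∧ f₂ a = x ∧ f₂ b = y)

namespace IsGluing

variable {V₁ V₂ V : Type*} {G₁ : SimpleGraph V₁} {G₂ : SimpleGraph V₂} {G : SimpleGraph V}
  {u₁ v₁ : V₁} {u₂ v₂ : V₂} {u v : V} {f₁ : V₁ → V} {f₂ : V₂ → V}

protected theorem symm (h : IsGluing G₁ G₂ G u₁ v₁ u₂ v₂ u v f₁ f₂) :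
    IsGluing G₂ G₁ G u₂ v₂ u₁ v₁ u v f₂ f₁ where
  injective₁ := h.injective₂
  injective₂ := h.injective₁
  range_union := union_comm (range f₂) _ ▸ h.range_union
  range_inter := inter_comm (range f₂) _ ▸ h.range_inter
  map_u₁ := h.map_u₂
  map_u₂ := h.map_u₁
  map_v₁ := h.map_v₂
  map_v₂ := h.map_v₁
  adj_iff x y := (h.adj_iff x y).trans or_comm

theorem adj_map₁ (h : IsGluing G₁ G₂ G u₁ v₁ u₂ v₂ u v f₁ f₂) {a b : V₁} (hab : G₁.Adj a b) :
    G.Adj (f₁ a) (f₁ b) :=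
  (h.adj_iff _ _).2 (Or.inl ⟨a, b, hab, rfl, rfl⟩)

theorem eq_of_map_eq (h : IsGluing G₁ G₂ G u₁ v₁ u₂ v₂ u v f₁ f₂) {a : V₁} {b : V₂}
    (hab : f₁ a = f₂ b) : a = u₁ ∧ b = u₂ ∨ a = v₁ ∧ b = v₂ := by
  rcases h.range_inter ⟨⟨a, rfl⟩, ⟨b, hab.symm⟩⟩ with hx | hx
  · exact Or.inl ⟨h.injective₁ (hx.trans h.map_u₁.symm),
      h.injective₂ (hab.symm.trans (hx.trans h.map_u₂.symm))⟩
  · exact Or.inr ⟨h.injective₁ (hx.trans h.map_v₁.symm),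
      h.injective₂ (hab.symm.trans (hx.trans h.map_v₂.symm))⟩

theorem separates_left (h : IsGluing G₁ G₂ G u₁ v₁ u₂ v₂ u v f₁ f₂) {T : Set V}
    (hT : Separates G u v T) : Separates G₁ u₁ v₁ (f₁ ⁻¹' T) := by
  have hT' : Separates G (f₁ u₁) (f₁ v₁) T := by rwa [h.map_u₁, h.map_v₁]
  exact Separates.comap ⟨f₁, h.adj_map₁⟩ hT'

theorem mem_image_compOf_of_adj (h : IsGluing G₁ G₂ G u₁ v₁ u₂ v₂ u v f₁ f₂) {T : Set V}
    (hu : u ∉ T) (h₁ : Separates G₁ u₁ v₁ (f₁ ⁻¹' T)) {a : V₁}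
    (ha : a ∈ compOf G₁ (f₁ ⁻¹' T) u₁) {y : V} (hay : G.Adj (f₁ a) y) (hy : y ∉ T) :
    y ∈ f₁ '' compOf G₁ (f₁ ⁻¹' T) u₁ ∪ f₂ '' compOf G₂ (f₂ ⁻¹' T) u₂ := by
  rcases (h.adj_iff _ _).1 hay with ⟨a', b, hab, ha', rfl⟩ | ⟨a', b, hab, ha', rfl⟩
  · obtain rfl := h.injective₁ ha'
    exact Or.inl ⟨b, mem_compOf_of_adj ha hab hy, rfl⟩
  · rcases h.eq_of_map_eq ha'.symm with ⟨-, rfl⟩ | ⟨rfl, -⟩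
    · have hu₂ : a' ∉ f₂ ⁻¹' T := by rwa [mem_preimage, h.map_u₂]
      exact Or.inr ⟨b, mem_compOf_of_adj (start_mem_compOf hu₂) hab hy, rfl⟩
    · exact absurd ha (separates_iff_notMem_compOf.1 h₁)

theorem separates_of_separates (h : IsGluing G₁ G₂ G u₁ v₁ u₂ v₂ u v f₁ f₂) {T : Set V}
    (hu : u ∉ T) (h₁ : Separates G₁ u₁ v₁ (f₁ ⁻¹' T)) (h₂ : Separates G₂ u₂ v₂ (f₂ ⁻¹' T)) :
    Separates G u v T := by
  have hu₁ : u₁ ∉ f₁ ⁻¹' T := by rwa [mem_preimage, h.map_u₁]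
  refine separates_of_closed
    (C := f₁ '' compOf G₁ (f₁ ⁻¹' T) u₁ ∪ f₂ '' compOf G₂ (f₂ ⁻¹' T) u₂)
    (Or.inl ⟨u₁, start_mem_compOf hu₁, h.map_u₁⟩) ?_ ?_
  · rintro (⟨a, ha, hav⟩ | ⟨a, ha, hav⟩)
    · rw [← h.map_v₁] at hav
      exact separates_iff_notMem_compOf.1 h₁ (h.injective₁ hav ▸ ha)
    · rw [← h.map_v₂] at hav
      exact separates_iff_notMem_compOf.1 h₂ (h.injective₂ hav ▸ ha)
  · rintro x y (⟨a, ha, rfl⟩ | ⟨a, ha, rfl⟩) hxy hy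
    · exact h.mem_image_compOf_of_adj hu h₁ ha hxy hy
    · exact union_comm _ (f₁ '' _) ▸ h.symm.mem_image_compOf_of_adj hu h₂ ha hxy hy

theorem image_preimage_union (h : IsGluing G₁ G₂ G u₁ v₁ u₂ v₂ u v f₁ f₂) (T : Set V) :
    f₁ '' (f₁ ⁻¹' T) ∪ f₂ '' (f₂ ⁻¹' T) = T := by
  rw [image_preimage_eq_inter_range, image_preimage_eq_inter_range, ← inter_union_distrib_left,
    h.range_union, inter_univ]

theorem preimage_image_union_left (h : IsGluing G₁ G₂ G u₁ v₁ u₂ v₂ u v f₁ f₂) {T₁ : Set V₁}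
    {T₂ : Set V₂} (hu : u₂ ∉ T₂) (hv : v₂ ∉ T₂) : f₁ ⁻¹' (f₁ '' T₁ ∪ f₂ '' T₂) = T₁ := by
  rw [preimage_union, h.injective₁.preimage_image, union_eq_left]
  rintro a ⟨b, hb, hba⟩
  rcases h.eq_of_map_eq hba.symm with ⟨-, rfl⟩ | ⟨-, rfl⟩
  exacts [absurd hb hu, absurd hb hv]

theorem preimage_image_union_right (h : IsGluing G₁ G₂ G u₁ v₁ u₂ v₂ u v f₁ f₂) {T₁ : Set V₁}
    {T₂ : Set V₂} (hu : u₁ ∉ T₁) (hv : v₁ ∉ T₁) : f₂ ⁻¹' (f₁ '' T₁ ∪ f₂ '' T₂) = T₂ := by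
  rw [union_comm]
  exact h.symm.preimage_image_union_left hu hv

theorem preimage_ssubset_or (h : IsGluing G₁ G₂ G u₁ v₁ u₂ v₂ u v f₁ f₂) {T T' : Set V}
    (hT : T' ⊂ T) : f₁ ⁻¹' T' ⊂ f₁ ⁻¹' T ∨ f₂ ⁻¹' T' ⊂ f₂ ⁻¹' T := by
  obtain ⟨x, hxT, hxT'⟩ := exists_of_ssubset hT
  rcases h.range_union ▸ mem_univ x with ⟨a, rfl⟩ | ⟨a, rfl⟩
  · exact Or.inl ⟨preimage_mono hT.subset, fun hsub => hxT' (hsub hxT)⟩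
  · exact Or.inr ⟨preimage_mono hT.subset, fun hsub => hxT' (hsub hxT)⟩

theorem isMinSeparator_left (h : IsGluing G₁ G₂ G u₁ v₁ u₂ v₂ u v f₁ f₂) {T : Set V}
    (hT : IsMinSeparator G u v T) : IsMinSeparator G₁ u₁ v₁ (f₁ ⁻¹' T) := by
  obtain ⟨hu, hv, hsep, hmin⟩ := hT
  have hu₁ : u₁ ∉ f₁ ⁻¹' T := by rwa [mem_preimage, h.map_u₁]
  have hv₁ : v₁ ∉ f₁ ⁻¹' T := by rwa [mem_preimage, h.map_v₁]
  have hu₂ : u₂ ∉ f₂ ⁻¹' T := by rwa [mem_preimage, h.map_u₂]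
  have hv₂ : v₂ ∉ f₂ ⁻¹' T := by rwa [mem_preimage, h.map_v₂]
  refine ⟨hu₁, hv₁, h.separates_left hsep, fun T₁ hT₁ hsep₁ => ?_⟩
  -- `T'` replaces the trace of `T` on the first side by the smaller separator `T₁`
  set T' := f₁ '' T₁ ∪ f₂ '' (f₂ ⁻¹' T)
  have hpre₁ : f₁ ⁻¹' T' = T₁ := h.preimage_image_union_left hu₂ hv₂
  have hpre₂ : f₂ ⁻¹' T' = f₂ ⁻¹' T :=
    h.preimage_image_union_right (fun h' => hu₁ (hT₁.subset h')) (fun h' => hv₁ (hT₁.subset h'))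
  have hT' : T' ⊂ T := by
    refine ⟨union_subset (image_subset_iff.2 hT₁.subset) (image_preimage_subset _ _),
      fun hsub => hT₁.2 (hpre₁ ▸ preimage_mono hsub)⟩
  exact hmin T' hT' (h.separates_of_separates (fun h' => hu (hT'.subset h'))
    (hpre₁ ▸ hsep₁) (hpre₂ ▸ h.symm.separates_left hsep))

theorem isMinSeparator_iff (h : IsGluing G₁ G₂ G u₁ v₁ u₂ v₂ u v f₁ f₂) {T : Set V} :
    IsMinSeparator G u v T ↔
      IsMinSeparator G₁ u₁ v₁ (f₁ ⁻¹' T) ∧ IsMinSeparator G₂ u₂ v₂ (f₂ ⁻¹' T) := by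
  refine ⟨fun hT => ⟨h.isMinSeparator_left hT, h.symm.isMinSeparator_left hT⟩, ?_⟩
  rintro ⟨⟨hu, hv, hsep₁, hmin₁⟩, ⟨-, -, hsep₂, hmin₂⟩⟩
  have hu : u ∉ T := h.map_u₁ ▸ hu
  refine ⟨hu, h.map_v₁ ▸ hv, h.separates_of_separates hu hsep₁ hsep₂, fun T' hT' hsep' => ?_⟩
  rcases h.preimage_ssubset_or hT' with h₁ | h₂
  · exact hmin₁ _ h₁ (h.separates_left hsep')
  · exact hmin₂ _ h₂ (h.symm.separates_left hsep')

theorem image_preimage_prod (h : IsGluing G₁ G₂ G u₁ v₁ u₂ v₂ u v f₁ f₂) :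
    (fun T => (f₁ ⁻¹' T, f₂ ⁻¹' T)) '' {T | IsMinSeparator G u v T} =
      {T₁ | IsMinSeparator G₁ u₁ v₁ T₁} ×ˢ {T₂ | IsMinSeparator G₂ u₂ v₂ T₂} := by
  ext ⟨T₁, T₂⟩
  constructor
  · rintro ⟨T, hT, hTT⟩
    rw [Prod.mk.injEq] at hTT
    exact hTT.1 ▸ hTT.2 ▸ h.isMinSeparator_iff.1 hT
  · rintro ⟨h₁, h₂⟩
    have hpre₁ : f₁ ⁻¹' (f₁ '' T₁ ∪ f₂ '' T₂) = T₁ := h.preimage_image_union_left h₂.1 h₂.2.1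
    have hpre₂ : f₂ ⁻¹' (f₁ '' T₁ ∪ f₂ '' T₂) = T₂ := h.preimage_image_union_right h₁.1 h₁.2.1
    refine ⟨f₁ '' T₁ ∪ f₂ '' T₂, ?_, Prod.ext hpre₁ hpre₂⟩
    show IsMinSeparator G u v _
    rw [h.isMinSeparator_iff, hpre₁, hpre₂]
    exact ⟨h₁, h₂⟩

theorem mc_eq_mul (h : IsGluing G₁ G₂ G u₁ v₁ u₂ v₂ u v f₁ f₂) :
    mc G u v = mc G₁ u₁ v₁ * mc G₂ u₂ v₂ := by
  have hinj : InjOn (fun T => (f₁ ⁻¹' T, f₂ ⁻¹' T)) {T | IsMinSeparator G u v T} :=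
    fun T _ T' _ hTT' => by
      rw [Prod.mk.injEq] at hTT'
      rw [← h.image_preimage_union T, ← h.image_preimage_union T', hTT'.1, hTT'.2]
  rw [mc, mc, mc, ← hinj.ncard_image, h.image_preimage_prod, ncard_prod]

end IsGluing

theorem glued_min_separators_general {V₁ V₂ V : Type*}
    (G₁ : SimpleGraph V₁) (G₂ : SimpleGraph V₂) (G : SimpleGraph V)
    (u₁ v₁ : V₁) (u₂ v₂ : V₂) (u v : V)
    (f₁ : V₁ → V) (f₂ : V₂ → V)
    (hf₁ : Function.Injective f₁) (hf₂ : Function.Injective f₂)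
    (hcover : Set.range f₁ ∪ Set.range f₂ = Set.univ)
    (hinter : Set.range f₁ ∩ Set.range f₂ = {u, v})
    (hu₁ : f₁ u₁ = u) (hu₂ : f₂ u₂ = u) (hv₁ : f₁ v₁ = v) (hv₂ : f₂ v₂ = v)
    (hadj : ∀ x y : V, G.Adj x y ↔
      (∃ a b : V₁, G₁.Adj a b ∧ f₁ a = x ∧ f₁ b = y) ∨
      (∃ a b : V₂, G₂.Adj a b ∧ f₂ a = x ∧ f₂ b = y)) :
    (∀ T : Set V, u ∉ T → v ∉ T →
      (IsMinSeparator G u v T ↔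
        IsMinSeparator G₁ u₁ v₁ (f₁ ⁻¹' T) ∧ IsMinSeparator G₂ u₂ v₂ (f₂ ⁻¹' T))) ∧
    mc G u v = mc G₁ u₁ v₁ * mc G₂ u₂ v₂ := by
  have h : IsGluing G₁ G₂ G u₁ v₁ u₂ v₂ u v f₁ f₂ :=
    ⟨hf₁, hf₂, hcover, hinter.subset, hu₁, hu₂, hv₁, hv₂, hadj⟩
  exact ⟨fun _ _ _ => h.isMinSeparator_iff, h.mc_eq_mul⟩

/-- Gluing: if `G` is obtained from the disjoint union of `G₁` and `G₂` by identifying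
`u₁` with `u₂` into `u` and `v₁` with `v₂` into `v` (expressed via injections
`f₁ : V₁ → V`, `f₂ : V₂ → V` whose ranges cover `V` and meet exactly in `{u, v}`,
with adjacency in `G` induced exactly from `G₁` and `G₂`), then `T` is a minimal
`u`–`v` separator of `G` iff its trace on each `Gᵢ` is a minimal `uᵢ`–`vᵢ` separator,
and consequently `mc G u v = mc G₁ u₁ v₁ * mc G₂ u₂ v₂`. -/
theorem glued_min_separators {V₁ V₂ V : Type*} [Fintype V₁] [Fintype V₂] [Fintype V]
    (G₁ : SimpleGraph V₁) (G₂ : SimpleGraph V₂) (G : SimpleGraph V)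
    (u₁ v₁ : V₁) (u₂ v₂ : V₂) (u v : V)
    (hu₁v₁ : u₁ ≠ v₁) (hu₂v₂ : u₂ ≠ v₂)
    (f₁ : V₁ → V) (f₂ : V₂ → V)
    (hf₁ : Function.Injective f₁) (hf₂ : Function.Injective f₂)
    (hcover : Set.range f₁ ∪ Set.range f₂ = Set.univ)
    (hinter : Set.range f₁ ∩ Set.range f₂ = {u, v})
    (hu₁ : f₁ u₁ = u) (hu₂ : f₂ u₂ = u) (hv₁ : f₁ v₁ = v) (hv₂ : f₂ v₂ = v)
    (hadj : ∀ x y : V, G.Adj x y ↔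
      (∃ a b : V₁, G₁.Adj a b ∧ f₁ a = x ∧ f₁ b = y) ∨
      (∃ a b : V₂, G₂.Adj a b ∧ f₂ a = x ∧ f₂ b = y)) :
    (∀ T : Set V, u ∉ T → v ∉ T →
      (IsMinSeparator G u v T ↔
        IsMinSeparator G₁ u₁ v₁ (f₁ ⁻¹' T) ∧ IsMinSeparator G₂ u₂ v₂ (f₂ ⁻¹' T))) ∧
    mc G u v = mc G₁ u₁ v₁ * mc G₂ u₂ v₂ :=
  glued_min_separators_general G₁ G₂ G u₁ v₁ u₂ v₂ u v f₁ f₂ hf₁ hf₂ hcover hinter hu₁ hu₂ hv₁ hv₂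
    hadj
end
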